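/- Let S_{3,1,1} be the spider on 6 vertices with one leg of three edges and two legs of one edge each. Then for every n ≥ 7, ex_c(n, S_{3,1,1}) = ⌊3(n−1)/2⌋, and ex_c(6, S_{3,1,1}) = 9. -/

import Mathlib

open SimpleGraph

/-- `G` contains a copy of `F`, i.e. a subgraph isomorphic to `F`
(given by an injective graph homomorphism). -/
def ContainsCopy {α β : Type*} (F : SimpleGraph α) (G : SimpleGraph β) : Prop :=
  ∃ f : α ↪ β, ∀ ⦃a b : α⦄, F.Adj a b → G.Adj (f a) (f b)

/-- The connected Turán number `ex_c(n, F)`: the maximum number of edges of a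
connected `F`-free simple graph on `n` vertices. -/
noncomputable def exConn {α : Type*} (n : ℕ) (F : SimpleGraph α) : ℕ :=
  sSup {m | ∃ G : SimpleGraph (Fin n), G.Connected ∧ ¬ ContainsCopy F G ∧ m = G.edgeSet.ncard}

/-- The spider `S_{3,1,1}` on 6 vertices: center `0`, one leg `0-1-2-3` of three edges,
and two legs `0-4`, `0-5` of one edge each. -/
def spider311 : SimpleGraph (Fin 6) :=
  SimpleGraph.fromRel (fun i j =>
    (i = 0 ∧ j = 1) ∨ (i = 1 ∧ j = 2) ∨ (i = 2 ∧ j = 3) ∨ (i = 0 ∧ j = 4) ∨ (i = 0 ∧ j = 5))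

/-! Let `v` be a vertex of maximum degree `Δ` of a connected `S_{3,1,1}`-free graph `G` on `n`
vertices, and `N = N(v)`. When `Δ ≥ 3`, a path `v x y z` leaving `N[v]` would, together with two
further neighbours of `v`, form a spider; hence every vertex is within distance two of `v` and the
vertices at distance two only see `N`, which gives `e(G) ≤ 9` when `Δ = 3`. When `Δ ≥ 4` the
vertices at distance two are leaves, so `e(G) = (n - 1) + e(N)`: for `Δ ≥ 5` the set `N` induces a
matching, and for `Δ = 4` the neighbour of a leaf (there is one as `n ≥ 6`) is isolated in `N`, so
`e(N) ≤ 3`. Altogether `2 e(G) ≤ max 18 (3 (n - 1))`. The bound is attained by the friendship graph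
(with a pendant vertex when `n` is even) for `n ≥ 7`, and by `K_{3,3}` for `n = 6`. -/

open Finset

variable {V : Type*} {G : SimpleGraph V}

theorem containsCopy_spider311_iff :
    ContainsCopy spider311 G ↔ ∃ v a b c d e : V, G.Adj v a ∧ G.Adj a b ∧ G.Adj b c ∧
      G.Adj v d ∧ G.Adj v e ∧ v ≠ b ∧ v ≠ c ∧ a ≠ c ∧ a ≠ d ∧ a ≠ e ∧ b ≠ d ∧ b ≠ e ∧
      c ≠ d ∧ c ≠ e ∧ d ≠ e := by
  constructor
  · rintro ⟨f, hf⟩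
    refine ⟨f 0, f 1, f 2, f 3, f 4, f 5, hf ?_, hf ?_, hf ?_, hf ?_, hf ?_, ?_⟩ <;>
      simp [spider311, f.injective.ne_iff]
  · rintro ⟨v, a, b, c, d, e, hva, hab, hbc, hvd, hve, hvb, hvc, hac, had, hae, hbd, hbe, hcd,
      hce, hde⟩
    refine ⟨⟨![v, a, b, c, d, e], ?_⟩, ?_⟩
    · simp only [Matrix.vecCons, Fin.cons_injective_iff]
      simp [Function.Injective, hva.ne, hab.ne, hbc.ne, hvd.ne, hve.ne, hvb, hvc, hac, had, hae,
        hbd, hbe, hcd, hce, hde]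
    · rintro i j ⟨-, h | h⟩ <;>
        rcases h with ⟨rfl, rfl⟩ | ⟨rfl, rfl⟩ | ⟨rfl, rfl⟩ | ⟨rfl, rfl⟩ | ⟨rfl, rfl⟩ <;>
        simp [hva, hab, hbc, hvd, hve, hva.symm, hab.symm, hbc.symm, hvd.symm, hve.symm]

theorem SimpleGraph.Reachable.mem_of_forall_adj_mem {S : Set V}
    (hS : ∀ a b, a ∈ S → G.Adj a b → b ∈ S) {u w : V} (h : G.Reachable u w) (hu : u ∈ S) :
    w ∈ S := by
  obtain ⟨p⟩ := h
  induction p with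
  | nil => exact hu
  | cons hadj _ ih => exact ih (hS _ _ hu hadj)

section

variable [DecidableRel G.Adj]

theorem sum_card_filter_adj_comm (s t : Finset V) :
    ∑ x ∈ s, #{w ∈ t | G.Adj x w} = ∑ y ∈ t, #{w ∈ s | G.Adj y w} := by
  simp only [card_filter]
  rw [sum_comm]
  simp only [G.adj_comm]

variable [DecidableEq V]

theorem sum_card_filter_adj_le_of_forall_not_adj {s : Finset V} {b : V} (hb : b ∈ s)
    (hbs : ∀ w ∈ s, ¬G.Adj b w) :
    ∑ x ∈ s, #{w ∈ s | G.Adj x w} ≤ (#s - 1) * (#s - 2) := by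
  have hbempty : #{w ∈ s | G.Adj b w} = 0 := card_eq_zero.2 (filter_eq_empty_iff.2 hbs)
  have hle : ∀ x ∈ s.erase b, #{w ∈ s | G.Adj x w} ≤ #s - 2 := by
    intro x hx
    have hsub : {w ∈ s | G.Adj x w} ⊆ (s.erase b).erase x := by
      intro w hw
      rw [mem_filter] at hw
      simp only [mem_erase]
      exact ⟨hw.2.ne', fun hwb => hbs x (mem_of_mem_erase hx) (hwb ▸ hw.2.symm), hw.1⟩
    calc #{w ∈ s | G.Adj x w} ≤ #((s.erase b).erase x) := card_le_card hsub
      _ = #s - 2 := by rw [card_erase_of_mem hx, card_erase_of_mem hb, Nat.sub_sub]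
  rw [← add_sum_erase s _ hb, hbempty, zero_add]
  calc ∑ x ∈ s.erase b, #{w ∈ s | G.Adj x w} ≤ #(s.erase b) * (#s - 2) := by
        simpa using sum_le_card_nsmul _ _ _ hle
    _ = (#s - 1) * (#s - 2) := by rw [card_erase_of_mem hb]

variable [Fintype V]

theorem sum_univ_eq_add_sum_neighborFinset_add_sum_compl {M : Type*} [AddCommMonoid M]
    (f : V → M) (v : V) :
    ∑ u, f u = f v + ∑ x ∈ G.neighborFinset v, f x +
      ∑ y ∈ (insert v (G.neighborFinset v))ᶜ, f y := by
  rw [← sum_add_sum_compl (insert v (G.neighborFinset v)), sum_insert (by simp)]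

theorem degree_eq_of_adj {v x : V} (hvx : G.Adj v x) :
    G.degree x = 1 + #{w ∈ G.neighborFinset v | G.Adj x w} +
      #{w ∈ (insert v (G.neighborFinset v))ᶜ | G.Adj x w} := by
  rw [← card_neighborFinset_eq_degree, neighborFinset_eq_filter, card_filter, card_filter,
    card_filter, sum_univ_eq_add_sum_neighborFinset_add_sum_compl (G := G) _ v, if_pos hvx.symm]

-- Otherwise two neighbours of `v` off the path `v x y z` complete a spider centred at `v`.
theorem degree_le_card_inter_add_one (hG : ¬ContainsCopy spider311 G) {v x y z : V}
    (hvx : G.Adj v x) (hxy : G.Adj x y) (hyz : G.Adj y z) (hyv : y ≠ v) (hzv : z ≠ v)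
    (hzx : z ≠ x) : G.degree v ≤ #({x, y, z} ∩ G.neighborFinset v) + 1 := by
  by_contra! h
  have : 1 < #(G.neighborFinset v \ {x, y, z}) := by
    rw [card_sdiff, card_neighborFinset_eq_degree]; omega
  obtain ⟨a, ha, b, hb, hab⟩ := one_lt_card.1 this
  simp only [mem_sdiff, mem_neighborFinset, mem_insert, mem_singleton, not_or] at ha hb
  exact hG <| containsCopy_spider311_iff.2 ⟨v, x, y, z, a, b, hvx, hxy, hyz, ha.1, hb.1, hyv.symm,
    hzv.symm, hzx.symm, Ne.symm ha.2.1, Ne.symm hb.2.1, Ne.symm ha.2.2.1, Ne.symm hb.2.2.1,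
    Ne.symm ha.2.2.2, Ne.symm hb.2.2.2, hab⟩

variable (hG : ¬ContainsCopy spider311 G) {v x y z : V}
include hG

theorem adj_of_three_le_degree (hv : 3 ≤ G.degree v) (hvx : G.Adj v x) (hxy : G.Adj x y)
    (hyz : G.Adj y z) (hvy : ¬G.Adj v y) : G.Adj v z := by
  rcases eq_or_ne y v with rfl | hyv
  · exact hyz
  by_contra hvz
  have := degree_le_card_inter_add_one hG hvx hxy hyz hyv (by rintro rfl; exact hvy hyz.symm)
    (by rintro rfl; exact hvz hvx)
  have hsub : {x, y, z} ∩ G.neighborFinset v ⊆ {x} := by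
    intro w; simp only [mem_inter, mem_insert, mem_singleton, mem_neighborFinset]
    rintro ⟨rfl | rfl | rfl, h⟩ <;> simp_all
  have : #({x, y, z} ∩ G.neighborFinset v) ≤ 1 :=
    (card_le_card hsub).trans (card_singleton x).le
  omega

theorem eq_of_four_le_degree (hv : 4 ≤ G.degree v) (hvx : G.Adj v x) (hxy : G.Adj x y)
    (hyz : G.Adj y z) (hyv : y ≠ v) (hvy : ¬G.Adj v y) : z = x := by
  by_contra hzx
  have := degree_le_card_inter_add_one hG hvx hxy hyz hyv (by rintro rfl; exact hvy hyz.symm) hzx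
  have hsub : {x, y, z} ∩ G.neighborFinset v ⊆ {x, z} := by
    intro w; simp only [mem_inter, mem_insert, mem_singleton, mem_neighborFinset]
    rintro ⟨rfl | rfl | rfl, h⟩ <;> simp_all
  have : #({x, y, z} ∩ G.neighborFinset v) ≤ 2 := (card_le_card hsub).trans card_le_two
  omega

theorem adj_of_four_le_degree (hv : 4 ≤ G.degree v) (hvx : G.Adj v x) (hxy : G.Adj x y)
    (hyz : G.Adj y z) (hyv : y ≠ v) (hzv : z ≠ v) : G.Adj v z := by
  by_contra hvz
  have := degree_le_card_inter_add_one hG hvx hxy hyz hyv hzv (by rintro rfl; exact hvz hvx)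
  have hsub : {x, y, z} ∩ G.neighborFinset v ⊆ {x, y} := by
    intro w; simp only [mem_inter, mem_insert, mem_singleton, mem_neighborFinset]
    rintro ⟨rfl | rfl | rfl, h⟩ <;> simp_all
  have : #({x, y, z} ∩ G.neighborFinset v) ≤ 2 := (card_le_card hsub).trans card_le_two
  omega

theorem eq_of_five_le_degree (hv : 5 ≤ G.degree v) (hvx : G.Adj v x) (hxy : G.Adj x y)
    (hyz : G.Adj y z) (hyv : y ≠ v) (hzv : z ≠ v) : z = x := by
  by_contra hzx
  have := degree_le_card_inter_add_one hG hvx hxy hyz hyv hzv hzx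
  have : #({x, y, z} ∩ G.neighborFinset v) ≤ 3 :=
    (card_le_card inter_subset_left).trans card_le_three
  omega

theorem exists_adj_adj_of_three_le_degree (hc : G.Connected) (hv : 3 ≤ G.degree v)
    (hyv : y ≠ v) (hvy : ¬G.Adj v y) : ∃ x, G.Adj v x ∧ G.Adj x y := by
  set S : Set V := {u | u = v ∨ G.Adj v u ∨ ∃ x, G.Adj v x ∧ G.Adj x u}
  have hS : ∀ a b, a ∈ S → G.Adj a b → b ∈ S := by
    rintro a b (rfl | hva | ⟨x, hvx, hxa⟩) hab
    · exact Or.inr (Or.inl hab)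
    · exact Or.inr (Or.inr ⟨a, hva, hab⟩)
    · by_cases hva : G.Adj v a
      · exact Or.inr (Or.inr ⟨a, hva, hab⟩)
      · exact Or.inr (Or.inl (adj_of_three_le_degree hG hv hvx hxa hab hva))
  obtain rfl | hvy' | h := (hc.preconnected v y).mem_of_forall_adj_mem hS (Or.inl rfl)
  · exact absurd rfl hyv
  · exact absurd hvy' hvy
  · exact h

theorem adj_of_adj_of_not_adj (hc : G.Connected) (hv : 3 ≤ G.degree v) (hyv : y ≠ v)
    (hvy : ¬G.Adj v y) (hyz : G.Adj y z) : G.Adj v z := by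
  obtain ⟨x, hvx, hxy⟩ := exists_adj_adj_of_three_le_degree hG hc hv hyv hvy
  exact adj_of_three_le_degree hG hv hvx hxy hyz hvy

theorem sum_degree_compl_eq (hc : G.Connected) (hv : 3 ≤ G.degree v) :
    ∑ y ∈ (insert v (G.neighborFinset v))ᶜ, G.degree y =
      ∑ x ∈ G.neighborFinset v, #{w ∈ (insert v (G.neighborFinset v))ᶜ | G.Adj x w} := by
  rw [sum_card_filter_adj_comm]
  refine sum_congr rfl fun y hy => ?_
  simp only [mem_compl, mem_insert, mem_neighborFinset, not_or] at hy
  rw [← card_neighborFinset_eq_degree]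
  congr 1
  ext z
  simp only [mem_neighborFinset, mem_filter, iff_and_self]
  exact adj_of_adj_of_not_adj hG hc hv hy.1 hy.2

theorem sum_degree_le_eighteen (hc : G.Connected) (hv : G.degree v = 3)
    (hmax : ∀ u, G.degree u ≤ 3) : ∑ u, G.degree u ≤ 18 := by
  rw [sum_univ_eq_add_sum_neighborFinset_add_sum_compl (G := G) (G.degree ·) v,
    sum_degree_compl_eq hG hc hv.ge, add_assoc, ← sum_add_distrib]
  have hle : ∀ x ∈ G.neighborFinset v,
      G.degree x + #{w ∈ (insert v (G.neighborFinset v))ᶜ | G.Adj x w} ≤ 5 := by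
    intro x hx
    have := degree_eq_of_adj (mem_neighborFinset _ _ _ |>.1 hx)
    have := hmax x
    omega
  have := sum_le_card_nsmul _ _ _ hle
  rw [card_neighborFinset_eq_degree, hv, smul_eq_mul] at this
  omega

theorem sum_degree_eq_of_four_le_degree (hc : G.Connected) (hv : 4 ≤ G.degree v) :
    ∑ u, G.degree u = 2 * (Fintype.card V - 1) +
      ∑ x ∈ G.neighborFinset v, #{w ∈ G.neighborFinset v | G.Adj x w} := by
  set N := G.neighborFinset v
  set D := (insert v N)ᶜ
  have hpendant : ∀ y ∈ D, G.degree y = 1 := by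
    intro y hy
    simp only [D, mem_compl, mem_insert, N, mem_neighborFinset, not_or] at hy
    obtain ⟨x, hvx, hxy⟩ := exists_adj_adj_of_three_le_degree hG hc (by omega) hy.1 hy.2
    rw [← card_neighborFinset_eq_degree, card_eq_one]
    refine ⟨x, ?_⟩
    ext z
    simp only [mem_neighborFinset, mem_singleton]
    exact ⟨fun hyz => eq_of_four_le_degree hG hv hvx hxy hyz hy.1 hy.2, fun h => h ▸ hxy.symm⟩
  have hD : ∑ y ∈ D, G.degree y = #D := by
    rw [card_eq_sum_ones]; exact sum_congr rfl hpendant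
  have hN : ∑ x ∈ N, G.degree x = #N + ∑ x ∈ N, #{w ∈ N | G.Adj x w} + #D := by
    rw [← hD, sum_degree_compl_eq hG hc (by omega), card_eq_sum_ones, ← sum_add_distrib,
      ← sum_add_distrib]
    exact sum_congr rfl fun x hx => degree_eq_of_adj ((mem_neighborFinset _ _ _).1 hx)
  have hcard : #D = Fintype.card V - (G.degree v + 1) := by
    rw [card_compl, card_insert_of_notMem (by simp [N]), card_neighborFinset_eq_degree]
  have := G.degree_lt_card_verts v
  rw [sum_univ_eq_add_sum_neighborFinset_add_sum_compl (G := G) (G.degree ·) v, hN, hD,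
    card_neighborFinset_eq_degree]
  omega

theorem sum_card_filter_adj_le_degree (hv : 5 ≤ G.degree v) :
    ∑ x ∈ G.neighborFinset v, #{w ∈ G.neighborFinset v | G.Adj x w} ≤ G.degree v := by
  have hle : ∀ x ∈ G.neighborFinset v, #{w ∈ G.neighborFinset v | G.Adj x w} ≤ 1 := by
    intro x hx
    refine card_le_one.2 fun p hp q hq => ?_
    simp only [mem_filter, mem_neighborFinset] at hx hp hq
    exact (eq_of_five_le_degree hG hv hp.1 hp.2.symm hq.2 hx.ne' hq.1.ne').symm
  simpa [card_neighborFinset_eq_degree] using sum_le_card_nsmul _ _ _ hle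

theorem sum_card_filter_adj_le_six (hc : G.Connected) (hV : 6 ≤ Fintype.card V)
    (hv : G.degree v = 4) :
    ∑ x ∈ G.neighborFinset v, #{w ∈ G.neighborFinset v | G.Adj x w} ≤ 6 := by
  obtain ⟨y, -, hy⟩ := exists_mem_notMem_of_card_lt_card (s := insert v (G.neighborFinset v))
    (t := univ) <| by
      have := card_insert_le v (G.neighborFinset v)
      rw [card_neighborFinset_eq_degree] at this
      rw [card_univ]; omega
  simp only [mem_insert, mem_neighborFinset, not_or] at hy
  obtain ⟨b, hvb, hby⟩ := exists_adj_adj_of_three_le_degree hG hc (by omega) hy.1 hy.2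
  have := sum_card_filter_adj_le_of_forall_not_adj ((mem_neighborFinset _ _ _).2 hvb)
    fun w hw hbw => hy.2 <| adj_of_four_le_degree hG hv.ge ((mem_neighborFinset _ _ _).1 hw)
      hbw.symm hby hvb.ne' hy.1
  rwa [card_neighborFinset_eq_degree, hv] at this

end

theorem two_mul_ncard_edgeSet_le [Fintype V] (hV : 6 ≤ Fintype.card V) (hc : G.Connected)
    (hG : ¬ContainsCopy spider311 G) :
    2 * G.edgeSet.ncard ≤ max 18 (3 * (Fintype.card V - 1)) := by
  classical
  have := hc.nonempty
  obtain ⟨v, hv⟩ := G.exists_maximal_degree_vertex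
  have hmax : ∀ u, G.degree u ≤ G.degree v := fun u => hv ▸ G.degree_le_maxDegree u
  have hlt := G.degree_lt_card_verts v
  rw [← coe_edgeFinset, Set.ncard_coe_finset, ← sum_degrees_eq_twice_card_edges]
  rcases (by omega : G.degree v ≤ 2 ∨ G.degree v = 3 ∨ G.degree v = 4 ∨ 5 ≤ G.degree v)
    with h | h | h | h
  · have := sum_le_card_nsmul univ (G.degree ·) 2 fun u _ => (hmax u).trans h
    rw [card_univ, smul_eq_mul] at this
    omega
  · have := sum_degree_le_eighteen hG hc h fun u => h ▸ hmax u
    omega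
  · have := sum_card_filter_adj_le_six hG hc hV h
    rw [sum_degree_eq_of_four_le_degree hG hc h.ge]
    omega
  · have := sum_card_filter_adj_le_degree hG h
    rw [sum_degree_eq_of_four_le_degree hG hc (Nat.le_of_succ_le h)]
    omega

theorem not_containsCopy_spider311_of_forall_adj (w : V)
    (h : ∀ u x y, u ≠ w → x ≠ w → y ≠ w → G.Adj u x → G.Adj u y → x = y) :
    ¬ContainsCopy spider311 G := by
  rw [containsCopy_spider311_iff]
  rintro ⟨v, a, b, c, d, e, hva, hab, hbc, hvd, hve, hvb, hvc, hac, had, hae, -, -, -, -, hde⟩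
  obtain rfl : v = w := by
    by_contra hvw
    by_cases haw : a = w
    · exact hde (h v d e hvw (haw ▸ had.symm) (haw ▸ hae.symm) hvd hve)
    by_cases hdw : d = w
    · exact hae (h v a e hvw haw (hdw ▸ hde.symm) hva hve)
    · exact had (h v a d hvw haw hdw hva hvd)
  exact hac (h b a c hvb.symm hva.ne' hvc.symm hab.symm hbc)

theorem not_containsCopy_spider311_of_bipartite [Fintype V] [DecidableEq V] (f : V → Bool)
    (hf : ∀ x y, G.Adj x y → f x ≠ f y) (hcard : ∀ i, #{x | f x = i} ≤ 3) :
    ¬ContainsCopy spider311 G := by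
  rw [containsCopy_spider311_iff]
  rintro ⟨v, a, b, c, d, e, hva, hab, hbc, hvd, hve, -, -, hac, had, hae, -, -, hcd, hce, hde⟩
  have two_valued : ∀ p q r : Bool, p ≠ r → q ≠ r → p = q := by decide
  have hc : f c = f a := two_valued _ _ _ (hf _ _ hbc).symm (hf _ _ hab)
  have hd : f d = f a := two_valued _ _ _ (hf _ _ hvd).symm (hf _ _ hva).symm
  have he : f e = f a := two_valued _ _ _ (hf _ _ hve).symm (hf _ _ hva).symm
  have hsub : {a, c, d, e} ⊆ ({x | f x = f a} : Finset V) := by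
    intro x
    simp only [mem_insert, mem_singleton, mem_filter, mem_univ, true_and]
    rintro (rfl | rfl | rfl | rfl) <;> first | rfl | assumption
  have := (card_le_card hsub).trans (hcard (f a))
  rw [card_insert_of_notMem (by simp [hac, had, hae]), card_insert_of_notMem (by simp [hcd, hce]),
    card_pair hde] at this
  omega

-- `0` is joined to every vertex and `2k - 1` to `2k`: the friendship graph, with a pendant vertex
-- when `n` is even.
def windmill (n : ℕ) : SimpleGraph (Fin n) :=
  SimpleGraph.fromRel fun i j => i.val = 0 ∨ (i.val + 1) / 2 = (j.val + 1) / 2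

theorem windmill_connected {n : ℕ} (hn : 0 < n) : (windmill n).Connected :=
  (connected_iff_exists_forall_reachable _).2 ⟨⟨0, hn⟩, fun u => by
    rcases eq_or_ne u ⟨0, hn⟩ with rfl | hu
    · rfl
    · exact Adj.reachable ⟨hu.symm, Or.inl (Or.inl rfl)⟩⟩

theorem not_containsCopy_windmill {n : ℕ} (hn : 0 < n) : ¬ContainsCopy spider311 (windmill n) :=
  not_containsCopy_spider311_of_forall_adj ⟨0, hn⟩ fun u x y hu hx hy hux huy => by
    simp only [windmill, fromRel_adj, ne_eq, Fin.ext_iff] at *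
    omega

theorem le_ncard_edgeSet_windmill (n : ℕ) :
    n - 1 + (n - 1) / 2 ≤ (windmill n).edgeSet.ncard := by
  let f : Fin (n - 1) ⊕ Fin ((n - 1) / 2) → Sym2 (Fin n) :=
    Sum.elim (fun i => s(⟨0, by have := i.2; omega⟩, ⟨i + 1, by have := i.2; omega⟩))
      fun k => s(⟨2 * k + 1, by have := k.2; omega⟩, ⟨2 * k + 2, by have := k.2; omega⟩)
  have hf : Function.Injective f := by
    rintro (i | k) (j | l) h <;> simp [f, Fin.ext_iff] at h ⊢ <;> omega
  have hsub : Set.range f ⊆ (windmill n).edgeSet := by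
    rintro _ ⟨i | k, rfl⟩
    · simp [f, windmill]
    · simp [f, windmill]
      omega
  calc n - 1 + (n - 1) / 2 = (Set.range f).ncard := by
        rw [Set.ncard_range_of_injective hf]; simp
    _ ≤ _ := Set.ncard_le_ncard hsub

def k33 : SimpleGraph (Fin 6) where
  Adj i j := decide (i.val < 3) ≠ decide (j.val < 3)
  symm := ⟨fun _ _ h => h.symm⟩
  loopless := ⟨fun _ h => h rfl⟩

instance : DecidableRel k33.Adj := fun _ _ => inferInstanceAs (Decidable (_ ≠ _))

theorem k33_connected : k33.Connected := by decide

theorem not_containsCopy_k33 : ¬ContainsCopy spider311 k33 :=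
  not_containsCopy_spider311_of_bipartite (fun i => decide (i.val < 3)) (fun _ _ h => h)
    (by decide)

theorem ncard_edgeSet_k33 : k33.edgeSet.ncard = 9 := by
  rw [← coe_edgeFinset, Set.ncard_coe_finset]; decide

theorem exConn_eq_of_le {α : Type*} {F : SimpleGraph α} {n m : ℕ} (G₀ : SimpleGraph (Fin n))
    (hc : G₀.Connected) (hF : ¬ContainsCopy F G₀) (hm : m ≤ G₀.edgeSet.ncard)
    (hle : ∀ G : SimpleGraph (Fin n), G.Connected → ¬ContainsCopy F G → G.edgeSet.ncard ≤ m) :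
    exConn n F = m := by
  refine IsGreatest.csSup_eq ⟨⟨G₀, hc, hF, hm.antisymm (hle G₀ hc hF)⟩, ?_⟩
  rintro _ ⟨G, hG, hGF, rfl⟩
  exact hle G hG hGF

/-- Theorem: `ex_c(n, S_{3,1,1}) = ⌊3(n-1)/2⌋` for every `n ≥ 7`, and
`ex_c(6, S_{3,1,1}) = 9`. -/
theorem exConn_spider311 :
    (∀ n : ℕ, 7 ≤ n → exConn n spider311 = 3 * (n - 1) / 2) ∧ exConn 6 spider311 = 9 := by
  have upper : ∀ n, 6 ≤ n → ∀ G : SimpleGraph (Fin n), G.Connected →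
      ¬ContainsCopy spider311 G → 2 * G.edgeSet.ncard ≤ max 18 (3 * (n - 1)) := by
    intro n hn G hc hG
    simpa using two_mul_ncard_edgeSet_le (by simpa using hn) hc hG
  constructor
  · intro n hn
    refine exConn_eq_of_le (windmill n) (windmill_connected (by omega))
      (not_containsCopy_windmill (by omega)) ?_ fun G hc hG => ?_
    · have := le_ncard_edgeSet_windmill n
      omega
    · have := upper n (by omega) G hc hG
      omega
  · refine exConn_eq_of_le k33 k33_connected not_containsCopy_k33 ncard_edgeSet_k33.ge
      fun G hc hG => ?_
    have := upper 6 le_rfl G hc hG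
    omega
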